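/- arXiv:1706.07270 — 2 statements merged into one kernel-verified Lean document; each statement's English description precedes it below -/
import Mathlib

section
/- (Bound on the nonlinearity term.) Let x_0,…,x_k and x̃_0,…,x̃_k be vectors in ℝ^d, let E ∈ ℝ^{d×(k+1)} be the matrix whose i-th column is x_i − x̃_i, let R̃ ∈ ℝ^{d×(k+1)} be any matrix, let λ > 0, and let c̃^λ be the regularized extrapolation coefficients computed from R̃. Then ‖Σ_{i=0}^{k} c̃^λ_i (x̃_i − x_i)‖ ≤ √(1 + ‖R̃‖²/λ) · ‖E‖/√(k+1). -/
/-! Testing the minimality of `c̃` against the uniform weights `1/(k+1)` gives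
`λ‖c̃‖² ≤ (‖R̃‖² + λ)/(k+1)`. The nonlinearity term is `-E c̃`, so its norm is at most `‖E‖ ‖c̃‖`. -/

open Matrix

/-- Operator 2-norm of a real matrix (norm of the induced map between Euclidean spaces). -/
noncomputable def opNorm {n m : ℕ} (M : Matrix (Fin n) (Fin m) ℝ) : ℝ :=
  ‖(Matrix.toEuclideanLin M).toContinuousLinearMap‖

/-- `c` is the vector of regularized extrapolation coefficients for the matrix `M`
and regularization parameter `lam`: it minimizes `‖M c‖² + lam ‖c‖²` over `{c : 𝟙ᵀc = 1}`. -/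
def IsRNACoeff {d k : ℕ} (M : Matrix (Fin d) (Fin (k+1)) ℝ) (lam : ℝ)
    (c : EuclideanSpace ℝ (Fin (k+1))) : Prop :=
  (∑ i, c i) = 1 ∧ ∀ c' : EuclideanSpace ℝ (Fin (k+1)), (∑ i, c' i) = 1 →
    ‖Matrix.toEuclideanLin M c‖ ^ 2 + lam * ‖c‖ ^ 2 ≤
      ‖Matrix.toEuclideanLin M c'‖ ^ 2 + lam * ‖c'‖ ^ 2

lemma norm_toEuclideanLin_le_opNorm {m n : ℕ} (M : Matrix (Fin m) (Fin n) ℝ)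
    (v : EuclideanSpace ℝ (Fin n)) : ‖toEuclideanLin M v‖ ≤ opNorm M * ‖v‖ :=
  (toEuclideanLin M).toContinuousLinearMap.le_opNorm v

lemma toEuclideanLin_eq_sum_smul_cols {m n : ℕ} (M : Matrix (Fin m) (Fin n) ℝ)
    (y : Fin n → EuclideanSpace ℝ (Fin m)) (hM : ∀ j i, M j i = y i j)
    (c : EuclideanSpace ℝ (Fin n)) : toEuclideanLin M c = ∑ i, c i • y i := by
  ext j
  simp [toLpLin_apply, mulVec, dotProduct, hM, WithLp.ofLp_sum, mul_comm]

noncomputable def uniformWeights (n : ℕ) : EuclideanSpace ℝ (Fin n) :=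
  WithLp.toLp 2 fun _ => (n : ℝ)⁻¹

lemma sum_uniformWeights {n : ℕ} (hn : n ≠ 0) : ∑ i, uniformWeights n i = 1 := by
  simp [uniformWeights, hn]

lemma norm_uniformWeights_sq (n : ℕ) : ‖uniformWeights n‖ ^ 2 = (n : ℝ)⁻¹ := by
  rw [EuclideanSpace.norm_eq, Real.sq_sqrt (by positivity)]
  simp only [uniformWeights, norm_inv, RCLike.norm_natCast, inv_pow, Finset.sum_const,
    Finset.card_univ, Fintype.card_fin, nsmul_eq_mul]
  field_simp

lemma IsRNACoeff.norm_sq_le {d k : ℕ} {M : Matrix (Fin d) (Fin (k+1)) ℝ} {lam : ℝ}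
    (hlam : 0 < lam) {c : EuclideanSpace ℝ (Fin (k+1))} (hc : IsRNACoeff M lam c) :
    ‖c‖ ^ 2 ≤ (1 + opNorm M ^ 2 / lam) / (k + 1) := by
  set u := uniformWeights (k + 1)
  have hu : ‖u‖ ^ 2 = ((k : ℝ) + 1)⁻¹ := by
    simpa using norm_uniformWeights_sq (k + 1)
  have hMu : ‖toEuclideanLin M u‖ ^ 2 ≤ opNorm M ^ 2 * ((k : ℝ) + 1)⁻¹ := by
    rw [← hu, ← mul_pow]
    exact pow_le_pow_left₀ (norm_nonneg _) (norm_toEuclideanLin_le_opNorm M u) 2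
  have hmin := hc.2 u (sum_uniformWeights k.succ_ne_zero)
  have hlam_c : lam * ‖c‖ ^ 2 ≤ (opNorm M ^ 2 + lam) * ((k : ℝ) + 1)⁻¹ := by
    nlinarith [sq_nonneg ‖toEuclideanLin M c‖]
  rw [div_eq_mul_inv]
  calc ‖c‖ ^ 2 = lam * ‖c‖ ^ 2 / lam := by field_simp
    _ ≤ (opNorm M ^ 2 + lam) * ((k : ℝ) + 1)⁻¹ / lam := by gcongr
    _ = (1 + opNorm M ^ 2 / lam) * ((k : ℝ) + 1)⁻¹ := by field_simp; ring

lemma IsRNACoeff.norm_le {d k : ℕ} {M : Matrix (Fin d) (Fin (k+1)) ℝ} {lam : ℝ}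
    (hlam : 0 < lam) {c : EuclideanSpace ℝ (Fin (k+1))} (hc : IsRNACoeff M lam c) :
    ‖c‖ ≤ Real.sqrt (1 + opNorm M ^ 2 / lam) / Real.sqrt (k + 1) := by
  rw [← Real.sqrt_div' _ (by positivity), ← Real.sqrt_sq (norm_nonneg c)]
  exact Real.sqrt_le_sqrt (hc.norm_sq_le hlam)

/-- Bound on the nonlinearity term:
`‖Σᵢ c̃^λ_i (x̃ᵢ − xᵢ)‖ ≤ √(1 + ‖R̃‖²/λ) · ‖E‖/√(k+1)`,
where `E` has columns `xᵢ − x̃ᵢ`. -/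
theorem rna_nonlinearity_bound (d k : ℕ)
    (x xt : Fin (k+1) → EuclideanSpace ℝ (Fin d))
    (E : Matrix (Fin d) (Fin (k+1)) ℝ)
    (hE : ∀ (j : Fin d) (i : Fin (k+1)), E j i = (x i - xt i) j)
    (Rt : Matrix (Fin d) (Fin (k+1)) ℝ) (lam : ℝ) (hlam : 0 < lam)
    (ct : EuclideanSpace ℝ (Fin (k+1))) (hct : IsRNACoeff Rt lam ct) :
    ‖∑ i : Fin (k+1), ct i • (xt i - x i)‖ ≤
      Real.sqrt (1 + opNorm Rt ^ 2 / lam) * (opNorm E / Real.sqrt (k + 1)) := by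
  have hsum : ∑ i, ct i • (xt i - x i) = -toEuclideanLin E ct := by
    rw [toEuclideanLin_eq_sum_smul_cols E (fun i => x i - xt i) hE, ← Finset.sum_neg_distrib]
    simp only [← smul_neg, neg_sub]
  calc ‖∑ i, ct i • (xt i - x i)‖ = ‖toEuclideanLin E ct‖ := by rw [hsum, norm_neg]
    _ ≤ opNorm E * ‖ct‖ := norm_toEuclideanLin_le_opNorm E ct
    _ ≤ opNorm E * (Real.sqrt (1 + opNorm Rt ^ 2 / lam) / Real.sqrt (k + 1)) := by
        gcongr
        · exact norm_nonneg _
        · exact hct.norm_le hlam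
    _ = Real.sqrt (1 + opNorm Rt ^ 2 / lam) * (opNorm E / Real.sqrt (k + 1)) := by ring
end

section
/- (Explicit bound on the stability term.) Fix κ ∈ (0,1), a symmetric matrix G ∈ ℝ^{d×d} with 0 ⪯ G ⪯ (1−κ)I, a point x* ∈ ℝ^d, and iterates x_{t+1} = x* + G(x_t − x*) starting from x_0 ∈ ℝ^d. Then for any vector Δ ∈ ℝ^{k+1}, ‖Σ_{i=0}^{k} Δ_i (x_i − x*)‖ ≤ √(k+1)·‖Δ‖·‖x_0 − x*‖. In particular, if Δ = c̃^λ − c^λ is the gap between the regularized extrapolation coefficients computed from two matrices R̃ and R with P = RᵀR − R̃ᵀR̃, then ‖Σ_{i=0}^{k} Δ_i (x_i − x*)‖ ≤ √(k+1)·(‖P‖/λ)·‖c^λ‖·‖x_0 − x*‖. -/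
/-!
Since `0 ⪯ G ⪯ (1 - κ) I`, the map `G` is nonexpansive, so `‖xᵢ - x*‖ ≤ ‖x₀ - x*‖` for every
iterate and Cauchy–Schwarz over the `k + 1` terms gives the first bound. For the second, the
regularized coefficients satisfy the first-order condition `⟪M c, M h⟫ + λ ⟪c, h⟫ = 0` for every
`h` with `𝟙ᵀ h = 0`; testing the conditions for `c` and `c̃` with `h = Δ = c̃ - c` and subtracting
gives `‖R̃ Δ‖² + λ ‖Δ‖² = ⟪c, P Δ⟫ ≤ ‖P‖ ‖c‖ ‖Δ‖`.
-/

open Matrix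

open scoped InnerProductSpace RealInnerProductSpace ComplexOrder

namespace ContinuousLinearMap

variable {𝕜 E : Type*} [RCLike 𝕜] [NormedAddCommGroup E] [InnerProductSpace 𝕜 E]

theorem IsPositive.norm_le_of_isPositive_smul_one_sub {T : E →L[𝕜] E} (hT : T.IsPositive)
    {a : ℝ} (ha : 0 ≤ a) (hTa : ((a : 𝕜) • 1 - T).IsPositive) : ‖T‖ ≤ a := by
  rw [T.norm_eq_iSup_rayleighQuotient hT.isSymmetric]
  refine ciSup_le fun x => ?_
  have h0 : 0 ≤ T.reApplyInnerSelf x := hT.re_inner_nonneg_left x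
  have ha' : T.reApplyInnerSelf x ≤ a * ‖x‖ ^ 2 := by
    have := hTa.re_inner_nonneg_left x
    simp only [_root_.sub_apply, _root_.smul_apply, one_apply_eq_self, inner_sub_left,
      inner_smul_left, map_sub, RCLike.conj_ofReal, RCLike.re_ofReal_mul,
      inner_self_eq_norm_sq] at this
    rw [reApplyInnerSelf_apply]
    linarith
  rw [abs_of_nonneg (div_nonneg h0 (sq_nonneg _))]
  exact div_le_of_le_mul₀ (sq_nonneg _) ha ha'

end ContinuousLinearMap

theorem Matrix.PosSemidef.norm_toEuclideanLin_apply_le {𝕜 n : Type*} [RCLike 𝕜] [Fintype n]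
    [DecidableEq n] {G : Matrix n n 𝕜} (hG : G.PosSemidef) {a : ℝ} (ha : 0 ≤ a)
    (hGa : ((a : 𝕜) • 1 - G).PosSemidef) (v : EuclideanSpace 𝕜 n) :
    ‖toEuclideanLin G v‖ ≤ a * ‖v‖ := by
  have hpos : ∀ {A : Matrix n n 𝕜}, A.PosSemidef →
      (toEuclideanCLM (n := n) (𝕜 := 𝕜) A).IsPositive :=
    fun hA => (LinearMap.isPositive_toContinuousLinearMap_iff _).mpr
      (Matrix.isPositive_toEuclideanLin_iff.mpr hA)
  have hGa' := hpos hGa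
  rw [map_sub, map_smul, map_one] at hGa'
  exact ((toEuclideanCLM (n := n) (𝕜 := 𝕜) G).le_opNorm v).trans <| by
    gcongr; exact (hpos hG).norm_le_of_isPositive_smul_one_sub ha hGa'

theorem antitone_norm_sub_of_forall_norm_le {E : Type*} [SeminormedAddCommGroup E] {A : E → E}
    (hA : ∀ v, ‖A v‖ ≤ ‖v‖) {xs : E} {x : ℕ → E} (hx : ∀ t, x (t + 1) = xs + A (x t - xs)) :
    Antitone fun t => ‖x t - xs‖ :=
  antitone_nat_of_succ_le fun t => by rw [hx t, add_sub_cancel_left]; exact hA _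

theorem norm_sum_smul_le_norm_mul_sqrt {ι E : Type*} [Fintype ι] [SeminormedAddCommGroup E]
    [NormedSpace ℝ E] (Δ : EuclideanSpace ℝ ι) (v : ι → E) :
    ‖∑ i, Δ i • v i‖ ≤ ‖Δ‖ * √(∑ i, ‖v i‖ ^ 2) := by
  calc ‖∑ i, Δ i • v i‖ ≤ ∑ i, ‖Δ i‖ * ‖v i‖ := (norm_sum_le _ _).trans_eq (by simp [norm_smul])
    _ ≤ √(∑ i, ‖Δ i‖ ^ 2) * √(∑ i, ‖v i‖ ^ 2) := Real.sum_mul_le_sqrt_mul_sqrt _ _ _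
    _ = ‖Δ‖ * √(∑ i, ‖v i‖ ^ 2) := by rw [EuclideanSpace.norm_eq]

theorem norm_sum_smul_le_sqrt_card_mul {ι E : Type*} [Fintype ι] [SeminormedAddCommGroup E]
    [NormedSpace ℝ E] (Δ : EuclideanSpace ℝ ι) {v : ι → E} {r : ℝ} (hv : ∀ i, ‖v i‖ ≤ r) :
    ‖∑ i, Δ i • v i‖ ≤ √(Fintype.card ι) * ‖Δ‖ * r := by
  refine (norm_sum_smul_le_norm_mul_sqrt Δ v).trans ?_
  rcases isEmpty_or_nonempty ι with _ | ⟨⟨i⟩⟩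
  · simp
  have hr : 0 ≤ r := (norm_nonneg _).trans (hv i)
  calc ‖Δ‖ * √(∑ i, ‖v i‖ ^ 2) ≤ ‖Δ‖ * √(∑ _i : ι, r ^ 2) := by gcongr with i; exact hv i
    _ = √(Fintype.card ι) * ‖Δ‖ * r := by
      rw [Finset.sum_const, Finset.card_univ, nsmul_eq_mul, Real.sqrt_mul (Nat.cast_nonneg _),
        Real.sqrt_sq hr]
      ring

theorem norm_add_smul_sq_real {F : Type*} [NormedAddCommGroup F] [InnerProductSpace ℝ F]
    (u w : F) (t : ℝ) : ‖u + t • w‖ ^ 2 = ‖u‖ ^ 2 + 2 * t * ⟪u, w⟫ + t ^ 2 * ‖w‖ ^ 2 := by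
  rw [norm_add_sq_real, inner_smul_right, norm_smul, mul_pow, Real.norm_eq_abs, sq_abs]; ring

theorem inner_map_add_inner_eq_zero_of_forall_le {E F : Type*} [NormedAddCommGroup E]
    [InnerProductSpace ℝ E] [NormedAddCommGroup F] [InnerProductSpace ℝ F] (L : E →ₗ[ℝ] F)
    (lam : ℝ) {c h : E}
    (hmin : ∀ t : ℝ, ‖L c‖ ^ 2 + lam * ‖c‖ ^ 2 ≤ ‖L (c + t • h)‖ ^ 2 + lam * ‖c + t • h‖ ^ 2) :
    ⟪L c, L h⟫ + lam * ⟪c, h⟫ = 0 := by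
  have hquad : ∀ t : ℝ, 0 ≤ (‖L h‖ ^ 2 + lam * ‖h‖ ^ 2) * (t * t)
      + 2 * (⟪L c, L h⟫ + lam * ⟪c, h⟫) * t + 0 := by
    intro t
    have := hmin t
    rw [map_add, map_smul, norm_add_smul_sq_real, norm_add_smul_sq_real] at this
    nlinarith
  have := discrim_le_zero hquad
  rw [discrim] at this
  nlinarith [sq_nonneg (⟪L c, L h⟫ + lam * ⟪c, h⟫)]

theorem IsRNACoeff.inner_add_inner_eq_zero {d k : ℕ} {M : Matrix (Fin d) (Fin (k+1)) ℝ} {lam : ℝ}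
    {c : EuclideanSpace ℝ (Fin (k+1))} (hc : IsRNACoeff M lam c)
    {h : EuclideanSpace ℝ (Fin (k+1))} (hh : ∑ i, h i = 0) :
    ⟪toEuclideanLin M c, toEuclideanLin M h⟫ + lam * ⟪c, h⟫ = 0 :=
  inner_map_add_inner_eq_zero_of_forall_le _ lam fun t => hc.2 _ <| by
    simp [Finset.sum_add_distrib, ← Finset.mul_sum, hc.1, hh]

theorem Matrix.inner_toEuclideanLin_toEuclideanLin {m n : Type*} [Fintype m] [Fintype n]
    [DecidableEq n] (M : Matrix m n ℝ) (a b : EuclideanSpace ℝ n) :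
    ⟪toEuclideanLin M a, toEuclideanLin M b⟫ = ⟪a, toEuclideanLin (Mᵀ * M) b⟫ := by
  classical
  rw [toLpLin_mul_same, LinearMap.comp_apply, ← conjTranspose_eq_transpose_of_trivial,
    toEuclideanLin_conjTranspose_eq_adjoint, LinearMap.adjoint_inner_right]

theorem IsRNACoeff.norm_sub_le {d k : ℕ} {R Rt : Matrix (Fin d) (Fin (k+1)) ℝ} {lam : ℝ}
    (hlam : 0 < lam) {c ct : EuclideanSpace ℝ (Fin (k+1))} (hc : IsRNACoeff R lam c)
    (hct : IsRNACoeff Rt lam ct) : ‖ct - c‖ ≤ opNorm (Rᵀ * R - Rtᵀ * Rt) / lam * ‖c‖ := by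
  set P := Rᵀ * R - Rtᵀ * Rt
  set Δ := ct - c
  have hΔ : ∑ i, Δ i = 0 := by simp [Δ, Finset.sum_sub_distrib, hc.1, hct.1]
  have hR := hc.inner_add_inner_eq_zero hΔ
  have hRt := hct.inner_add_inner_eq_zero hΔ
  have hP : ∀ v, ⟪c, toEuclideanLin P v⟫ =
      ⟪toEuclideanLin R c, toEuclideanLin R v⟫ - ⟪toEuclideanLin Rt c, toEuclideanLin Rt v⟫ := by
    intro v
    rw [map_sub, LinearMap.sub_apply, inner_sub_right, inner_toEuclideanLin_toEuclideanLin,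
      inner_toEuclideanLin_toEuclideanLin]
  have hct_eq : ct = c + Δ := by simp [Δ]
  have hkey : ‖toEuclideanLin Rt Δ‖ ^ 2 + lam * ‖Δ‖ ^ 2 = ⟪c, toEuclideanLin P Δ⟫ := by
    rw [hct_eq, map_add, inner_add_left, inner_add_left] at hRt
    rw [hP, ← real_inner_self_eq_norm_sq, ← real_inner_self_eq_norm_sq]
    linarith
  have hbound : ⟪c, toEuclideanLin P Δ⟫ ≤ ‖c‖ * (opNorm P * ‖Δ‖) :=
    (real_inner_le_norm _ _).trans <| by
      gcongr; exact (toEuclideanLin P).toContinuousLinearMap.le_opNorm Δ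
  rw [div_mul_eq_mul_div, le_div_iff₀ hlam]
  rcases (norm_nonneg Δ).eq_or_lt with h0 | hpos
  · have : 0 ≤ opNorm P := norm_nonneg _
    rw [← h0, zero_mul]; positivity
  · nlinarith [sq_nonneg ‖toEuclideanLin Rt Δ‖]

theorem rna_stability_term_bound_general (d k : ℕ) (κ : ℝ) (hκ : κ ∈ Set.Ioo (0:ℝ) 1)
    (G : Matrix (Fin d) (Fin d) ℝ)
    (hG0 : G.PosSemidef)
    (hG1 : ((1 - κ) • (1 : Matrix (Fin d) (Fin d) ℝ) - G).PosSemidef)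
    (xs : EuclideanSpace ℝ (Fin d)) (x : ℕ → EuclideanSpace ℝ (Fin d))
    (hx : ∀ t : ℕ, x (t+1) = xs + Matrix.toEuclideanLin G (x t - xs)) :
    (∀ Δ : EuclideanSpace ℝ (Fin (k+1)),
      ‖∑ i : Fin (k+1), Δ i • (x i - xs)‖ ≤ Real.sqrt (k + 1) * ‖Δ‖ * ‖x 0 - xs‖) ∧
    (∀ (R Rt : Matrix (Fin d) (Fin (k+1)) ℝ) (lam : ℝ), 0 < lam →
      ∀ (P : Matrix (Fin (k+1)) (Fin (k+1)) ℝ), P = Rᵀ * R - Rtᵀ * Rt →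
      ∀ c ct : EuclideanSpace ℝ (Fin (k+1)),
        IsRNACoeff R lam c → IsRNACoeff Rt lam ct →
        ‖∑ i : Fin (k+1), (ct i - c i) • (x i - xs)‖ ≤
          Real.sqrt (k + 1) * (opNorm P / lam) * ‖c‖ * ‖x 0 - xs‖) := by
  obtain ⟨hκ0, hκ1⟩ := hκ
  have hG : ∀ v, ‖toEuclideanLin G v‖ ≤ ‖v‖ := fun v =>
    (hG0.norm_toEuclideanLin_apply_le (a := 1 - κ) (by linarith) hG1 v).trans
      (mul_le_of_le_one_left (norm_nonneg v) (by linarith))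
  have hdecay := antitone_norm_sub_of_forall_norm_le hG hx
  have hstab : ∀ Δ : EuclideanSpace ℝ (Fin (k+1)),
      ‖∑ i : Fin (k+1), Δ i • (x i - xs)‖ ≤ √(k + 1) * ‖Δ‖ * ‖x 0 - xs‖ := fun Δ => by
    simpa using norm_sum_smul_le_sqrt_card_mul Δ fun i : Fin (k+1) => hdecay (Nat.zero_le i)
  refine ⟨hstab, ?_⟩
  rintro R Rt lam hlam P rfl c ct hc hct
  calc ‖∑ i : Fin (k+1), (ct i - c i) • (x i - xs)‖ ≤ √(k + 1) * ‖ct - c‖ * ‖x 0 - xs‖ :=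
        hstab (ct - c)
    _ ≤ √(k + 1) * (opNorm (Rᵀ * R - Rtᵀ * Rt) / lam * ‖c‖) * ‖x 0 - xs‖ := by
        gcongr; exact hc.norm_sub_le hlam hct
    _ = _ := by ring

/-- Explicit bound on the stability term: for iterates of the linearized model,
`‖Σᵢ Δᵢ (xᵢ − x*)‖ ≤ √(k+1)·‖Δ‖·‖x₀ − x*‖`, and with `Δ = c̃^λ − c^λ`,
`‖Σᵢ Δᵢ (xᵢ − x*)‖ ≤ √(k+1)·(‖P‖/λ)·‖c^λ‖·‖x₀ − x*‖`. -/
theorem rna_stability_term_bound (d k : ℕ) (κ : ℝ) (hκ : κ ∈ Set.Ioo (0:ℝ) 1)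
    (G : Matrix (Fin d) (Fin d) ℝ) (hGsymm : G.IsSymm)
    (hG0 : G.PosSemidef)
    (hG1 : ((1 - κ) • (1 : Matrix (Fin d) (Fin d) ℝ) - G).PosSemidef)
    (xs : EuclideanSpace ℝ (Fin d)) (x : ℕ → EuclideanSpace ℝ (Fin d))
    (hx : ∀ t : ℕ, x (t+1) = xs + Matrix.toEuclideanLin G (x t - xs)) :
    (∀ Δ : EuclideanSpace ℝ (Fin (k+1)),
      ‖∑ i : Fin (k+1), Δ i • (x i - xs)‖ ≤ Real.sqrt (k + 1) * ‖Δ‖ * ‖x 0 - xs‖) ∧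
    (∀ (R Rt : Matrix (Fin d) (Fin (k+1)) ℝ) (lam : ℝ), 0 < lam →
      ∀ (P : Matrix (Fin (k+1)) (Fin (k+1)) ℝ), P = Rᵀ * R - Rtᵀ * Rt →
      ∀ c ct : EuclideanSpace ℝ (Fin (k+1)),
        IsRNACoeff R lam c → IsRNACoeff Rt lam ct →
        ‖∑ i : Fin (k+1), (ct i - c i) • (x i - xs)‖ ≤
          Real.sqrt (k + 1) * (opNorm P / lam) * ‖c‖ * ‖x 0 - xs‖) :=
  rna_stability_term_bound_general d k κ hκ G hG0 hG1 xs x hx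
end
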